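/- Let F be an algebraically closed differential field of characteristic zero, and let K be a differential field extension of F with K = F(y) for some y ∈ K transcendental over F, such that y' = a_2·y² + a_3·y³ + ⋯ + a_n·y^n for some n ≥ 3 and a_2, …, a_n ∈ F, where there is no element u ∈ F with u' = a_2 and no element u ∈ F with u' = a_3. Then there is no element w ∈ K \ F satisfying w' = b_2·w² + b_1·w + b_0 for any b_0, b_1, b_2 ∈ F. -/

import Mathlib

set_option linter.unusedSectionVars false

open PowerSeries

namespace Stmt7Aux

variable {E : Type*} [Field E]

/-- coefficientwise application of `d` to a power series -/
noncomputable def pdS (d : E → E) (f : PowerSeries E) : PowerSeries E :=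
  PowerSeries.mk fun n => d (PowerSeries.coeff n f)

@[simp] lemma coeff_pdS (d : E → E) (f : PowerSeries E) (n : ℕ) :
    PowerSeries.coeff n (pdS d f) = d (PowerSeries.coeff n f) :=
  PowerSeries.coeff_mk _ _

section d

variable (d : E → E) (hadd : ∀ a b, d (a + b) = d a + d b)
  (hmul : ∀ a b, d (a * b) = a * d b + d a * b)

include hadd in
lemma d_zero : d 0 = 0 := by
  have := hadd 0 0
  simpa using this

include hmul hadd in
lemma d_one : d 1 = 0 := by
  have := hmul 1 1
  simpa using this

include hadd in
lemma pdS_add (f g : PowerSeries E) : pdS d (f + g) = pdS d f + pdS d g := by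
  ext n
  simp [hadd]

include hadd hmul in
lemma pdS_mul (f g : PowerSeries E) :
    pdS d (f * g) = f * pdS d g + pdS d f * g := by
  ext n
  have hd : d (∑ p ∈ Finset.HasAntidiagonal.antidiagonal n,
      PowerSeries.coeff p.1 f * PowerSeries.coeff p.2 g)
      = ∑ p ∈ Finset.HasAntidiagonal.antidiagonal n,
        d (PowerSeries.coeff p.1 f * PowerSeries.coeff p.2 g) :=
    map_sum (AddMonoidHom.mk' d hadd) _ _
  simp only [map_add, coeff_pdS, PowerSeries.coeff_mul, hd, hmul]
  rw [Finset.sum_add_distrib]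

lemma pdS_C (hd0 : d 0 = 0) (c : E) :
    pdS d (PowerSeries.C c) = PowerSeries.C (d c) := by
  ext n
  simp only [coeff_pdS, PowerSeries.coeff_C]
  split <;> simp [hd0]

lemma derivativeFun_C' (c : E) : derivativeFun (PowerSeries.C c) = 0 := derivative_C

lemma coeff_derivativeFun' (f : PowerSeries E) (n : ℕ) :
    PowerSeries.coeff n (derivativeFun f) = PowerSeries.coeff (n + 1) f * (n + 1) :=
  coeff_derivative f n

lemma derivativeFun_coe' (f : Polynomial E) :
    derivativeFun (f : PowerSeries E) = Polynomial.derivative f := derivative_coe f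

/-- the derivation `f ↦ pdS d f + X^2 * S * f'` on power series -/
noncomputable def Del (d : E → E) (S : PowerSeries E) (f : PowerSeries E) : PowerSeries E :=
  pdS d f + PowerSeries.X ^ 2 * S * derivativeFun f

include hadd hmul in
lemma Del_mul (S f g : PowerSeries E) :
    Del d S (f * g) = f * Del d S g + Del d S f * g := by
  unfold Del
  rw [pdS_mul d hadd hmul, derivativeFun_mul]
  simp only [smul_eq_mul]
  ring

include hadd hmul in
lemma Del_C (S : PowerSeries E) (c : E) :
    Del d S (PowerSeries.C c) = PowerSeries.C (d c) := by
  unfold Del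
  rw [pdS_C d (d_zero d hadd), derivativeFun_C']
  ring

include hadd hmul in
lemma Del_one (S : PowerSeries E) : Del d S 1 = 0 := by
  have := Del_C d hadd hmul S 1
  simpa [d_one d hadd hmul] using this

include hadd hmul in
lemma Del_X (S : PowerSeries E) : Del d S PowerSeries.X = PowerSeries.X ^ 2 * S := by
  unfold Del
  have h1 : pdS d (X : PowerSeries E) = 0 := by
    ext n
    simp only [coeff_pdS, PowerSeries.coeff_X, map_zero]
    split <;> simp [d_zero d hadd, d_one d hadd hmul]
  have h2 : derivativeFun (PowerSeries.X : PowerSeries E) = 1 := by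
    ext n
    simp only [coeff_derivativeFun', PowerSeries.coeff_X, PowerSeries.coeff_one,
      Nat.add_eq_zero, and_false, if_false]
    rcases n with _ | n
    · simp
    · have h1 : ¬ (n + 1 + 1 = 1) := by omega
      have h2 : ¬ (n + 1 = 0) := by omega
      simp [h1, h2]
  rw [h1, h2]
  ring

include hadd hmul in
lemma Del_X_pow (S : PowerSeries E) (k : ℕ) :
    Del d S (PowerSeries.X ^ k) = PowerSeries.C (k : E) * PowerSeries.X ^ (k + 1) * S := by
  induction k with
  | zero => simpa using Del_one d hadd hmul S
  | succ m ih =>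
    have hx : (PowerSeries.X : PowerSeries E) ^ (m + 1) = PowerSeries.X ^ m * PowerSeries.X := by
      ring
    rw [hx, Del_mul d hadd hmul, ih, Del_X d hadd hmul]
    push_cast
    simp only [map_add, map_one]
    ring


/-- coefficientwise application of `d` to a polynomial -/
noncomputable def pdP (d : E → E) (p : Polynomial E) : Polynomial E :=
  p.sum fun i c => Polynomial.C (d c) * Polynomial.X ^ i

lemma coeff_pdP (hd0 : d 0 = 0) (p : Polynomial E) (m : ℕ) :
    (pdP d p).coeff m = d (p.coeff m) := by
  rw [pdP, Polynomial.sum, Polynomial.finset_sum_coeff]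
  simp only [Polynomial.coeff_C_mul, Polynomial.coeff_X_pow, mul_ite, mul_one, mul_zero]
  simp only [eq_comm (a := m)]
  rw [Finset.sum_ite_eq' p.support m (fun i => d (p.coeff i))]
  split
  · rfl
  · next h =>
    rw [Polynomial.notMem_support_iff.mp h, hd0]


include hadd in
lemma pdP_add (f g : Polynomial E) : pdP d (f + g) = pdP d f + pdP d g := by
  ext m
  rw [Polynomial.coeff_add, coeff_pdP d (d_zero d hadd), coeff_pdP d (d_zero d hadd),
    coeff_pdP d (d_zero d hadd), Polynomial.coeff_add, hadd]

lemma pdP_monomial (hd0 : d 0 = 0) (m : ℕ) (e : E) :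
    pdP d (Polynomial.monomial m e) = Polynomial.monomial m (d e) := by
  ext j
  rw [coeff_pdP d hd0, Polynomial.coeff_monomial, Polynomial.coeff_monomial]
  split <;> simp [hd0]

include hadd in
lemma pdP_coe (p : Polynomial E) :
    ((pdP d p : Polynomial E) : PowerSeries E) = pdS d (p : PowerSeries E) := by
  ext n
  rw [Polynomial.coeff_coe, coeff_pdP d (d_zero d hadd), coeff_pdS, Polynomial.coeff_coe]

lemma exists_X_pow_mul (q : Polynomial E) (hq : q ≠ 0) :
    ∃ (k : ℕ) (r : Polynomial E), q = Polynomial.X ^ k * r ∧ r.coeff 0 ≠ 0 := by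
  obtain ⟨r, hr, hnd⟩ := q.exists_eq_pow_rootMultiplicity_mul_and_not_dvd hq 0
  refine ⟨q.rootMultiplicity 0, r, ?_, ?_⟩
  · simpa using hr
  · intro h0
    exact hnd (by simpa using Polynomial.X_dvd_iff.mpr h0)


include hadd hmul in
lemma d_inv (x : E) (hx : x ≠ 0) : d x⁻¹ = -(d x * x⁻¹ * x⁻¹) := by
  have h1 := hmul x x⁻¹
  rw [mul_inv_cancel₀ hx, d_one d hadd hmul] at h1
  field_simp at h1 ⊢
  linear_combination -h1

include hadd in
lemma d_nat_cancel [CharZero E] (k : ℕ) (hk : k ≠ 0) (c w : E) (hc : d c = (k : E) * w) :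
    d ((k : E)⁻¹ * c) = w := by
  have hkE : (k : E) ≠ 0 := Nat.cast_ne_zero.mpr hk
  have h1 : c = (k : E) * ((k : E)⁻¹ * c) := by field_simp
  have h2 : d c = (k : E) * d ((k : E)⁻¹ * c) := by
    conv_lhs => rw [h1, ← nsmul_eq_mul]
    have : d (k • ((k : E)⁻¹ * c)) = (AddMonoidHom.mk' d hadd) (k • ((k : E)⁻¹ * c)) := rfl
    rw [this, map_nsmul, nsmul_eq_mul]
    rfl
  have := h2.symm.trans hc
  exact mul_left_cancel₀ hkE this

lemma coeff_zero_mul' (A B : PowerSeries E) :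
    PowerSeries.coeff 0 (A * B) = PowerSeries.coeff 0 A * PowerSeries.coeff 0 B := by
  simp [PowerSeries.coeff_mul]

lemma coeff_one_mul' (A B : PowerSeries E) :
    PowerSeries.coeff 1 (A * B)
      = PowerSeries.coeff 0 A * PowerSeries.coeff 1 B
        + PowerSeries.coeff 1 A * PowerSeries.coeff 0 B := by
  rw [PowerSeries.coeff_mul]
  rw [Finset.Nat.sum_antidiagonal_eq_sum_range_succ_mk]
  simp [Finset.sum_range_succ]

include hadd hmul in
lemma core [CharZero E] (S p q : Polynomial E) (b2 b1 b0 : E)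
    (hq : q ≠ 0) (hcop : IsCoprime p q) (hq0 : q.coeff 0 = 0)
    (heq : (pdP d p + Polynomial.derivative p * (Polynomial.X ^ 2 * S)) * q
          - p * (pdP d q + Polynomial.derivative q * (Polynomial.X ^ 2 * S))
        = Polynomial.C b2 * p ^ 2 + Polynomial.C b1 * (p * q) + Polynomial.C b0 * q ^ 2) :
    (∃ u, d u = S.coeff 0) ∨ (∃ u, d u = S.coeff 1) := by
  obtain ⟨k, r, hqd, hr0⟩ := exists_X_pow_mul q hq
  have hk : k ≠ 0 := by
    rintro rfl
    rw [pow_zero, one_mul] at hqd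
    exact hr0 (hqd ▸ hq0)
  have hp0 : p.coeff 0 ≠ 0 := by
    intro h0
    have hxp : (Polynomial.X : Polynomial E) ∣ p := Polynomial.X_dvd_iff.mpr h0
    have hxq : (Polynomial.X : Polynomial E) ∣ q := Polynomial.X_dvd_iff.mpr hq0
    exact Polynomial.not_isUnit_X (hcop.isUnit_of_dvd' hxp hxq)
  set σ : PowerSeries E := (S : PowerSeries E) with hσ
  set π : PowerSeries E := (p : PowerSeries E) with hπdef
  set ρ : PowerSeries E := (r : PowerSeries E) with hρdef
  have hDPcoe : ∀ t : Polynomial E,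
      ((pdP d t + Polynomial.derivative t * (Polynomial.X ^ 2 * S) : Polynomial E) :
        PowerSeries E) = Del d σ (t : PowerSeries E) := by
    intro t
    rw [Polynomial.coe_add, Polynomial.coe_mul, Polynomial.coe_mul, Polynomial.coe_pow,
      Polynomial.coe_X, pdP_coe d hadd, ← derivativeFun_coe']
    unfold Del
    ring
  have hser : Del d σ π * (PowerSeries.X ^ k * ρ) - π * Del d σ (PowerSeries.X ^ k * ρ)
      = PowerSeries.C b2 * π ^ 2
        + PowerSeries.C b1 * (π * (PowerSeries.X ^ k * ρ))
        + PowerSeries.C b0 * (PowerSeries.X ^ k * ρ) ^ 2 := by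
    rw [hqd] at heq
    have key := congrArg (fun t : Polynomial E => (t : PowerSeries E)) heq
    simp only [Polynomial.coe_sub, Polynomial.coe_add, Polynomial.coe_mul, Polynomial.coe_pow,
      Polynomial.coe_C, Polynomial.coe_X, hDPcoe] at key
    rw [← hπdef, ← hρdef] at key
    convert key using 2
  have hρ0 : PowerSeries.constantCoeff ρ ≠ 0 := by
    rw [hρdef, Polynomial.constantCoeff_coe]
    exact hr0
  have hρne : ρ ≠ 0 := fun h => hρ0 (by rw [h]; simp)
  set h : PowerSeries E := π * ρ⁻¹ with hh
  have hinvρ : ρ⁻¹ * ρ = 1 := PowerSeries.inv_mul_cancel ρ hρ0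
  have hπ : π = h * ρ := by
    rw [hh, mul_assoc, hinvρ, mul_one]
  have e1 : Del d σ π = h * Del d σ ρ + Del d σ h * ρ := by
    rw [hπ]; exact Del_mul d hadd hmul σ h ρ
  have e2 : Del d σ (PowerSeries.X ^ k * ρ)
      = PowerSeries.X ^ k * Del d σ ρ
        + (PowerSeries.C (k : E) * PowerSeries.X ^ (k + 1) * σ) * ρ := by
    rw [Del_mul d hadd hmul, Del_X_pow d hadd hmul]
  rw [e1, e2, hπ] at hser
  have key2 : ρ ^ 2 * (PowerSeries.X ^ k * Del d σ h
        - PowerSeries.C (k : E) * PowerSeries.X ^ (k + 1) * (σ * h))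
      = ρ ^ 2 * (PowerSeries.C b2 * h ^ 2
        + PowerSeries.C b1 * (PowerSeries.X ^ k * h)
        + PowerSeries.C b0 * (PowerSeries.X ^ k) ^ 2) := by
    linear_combination hser
  have hE1 := mul_left_cancel₀ (pow_ne_zero 2 hρne) key2
  have hh0 : PowerSeries.constantCoeff h ≠ 0 := by
    rw [hh, map_mul, PowerSeries.constantCoeff_inv]
    exact mul_ne_zero (by rw [hπdef, Polynomial.constantCoeff_coe]; exact hp0)
      (inv_ne_zero (by rw [hρdef, Polynomial.constantCoeff_coe]; exact hr0))
  set h0 : E := PowerSeries.constantCoeff h with hh0def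
  have hb2 : b2 = 0 := by
    have hc := congrArg (PowerSeries.constantCoeff) hE1
    simp only [map_sub, map_add, map_mul, map_pow, PowerSeries.constantCoeff_X,
      PowerSeries.constantCoeff_C, zero_pow hk, zero_pow (Nat.succ_ne_zero k),
      zero_mul, mul_zero, sub_zero, zero_add, add_zero, ← hh0def] at hc
    norm_num at hc
    rcases hc with h' | h'
    · exact h'
    · exact absurd h' hh0
  rw [hb2] at hE1
  have hXk : (PowerSeries.X : PowerSeries E) ^ k ≠ 0 := pow_ne_zero _ PowerSeries.X_ne_zero
  have hE3 : Del d σ h = PowerSeries.C (k : E) * (PowerSeries.X * (σ * h))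
      + PowerSeries.C b1 * h + PowerSeries.C b0 * PowerSeries.X ^ k := by
    have hz : PowerSeries.X ^ k * (Del d σ h - (PowerSeries.C (k : E) * (PowerSeries.X * (σ * h))
        + PowerSeries.C b1 * h + PowerSeries.C b0 * PowerSeries.X ^ k)) = 0 := by
      have : PowerSeries.C (0 : E) = 0 := map_zero _
      linear_combination hE1 + h ^ 2 * this
    rcases mul_eq_zero.mp hz with h' | h'
    · exact absurd h' hXk
    · exact sub_eq_zero.mp h'
  -- constant coefficient of Del
  have hDel0 : ∀ f : PowerSeries E,
      PowerSeries.constantCoeff (Del d σ f) = d (PowerSeries.constantCoeff f) := by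
    intro f
    unfold Del
    rw [map_add, map_mul, map_mul, map_pow, PowerSeries.constantCoeff_X]
    rw [← PowerSeries.coeff_zero_eq_constantCoeff_apply (pdS d f), coeff_pdS,
      PowerSeries.coeff_zero_eq_constantCoeff_apply]
    norm_num
  have hb1 : d h0 = b1 * h0 := by
    have hc := congrArg (PowerSeries.constantCoeff) hE3
    rw [hDel0] at hc
    simp only [map_add, map_mul, PowerSeries.constantCoeff_X, PowerSeries.constantCoeff_C,
      map_pow, zero_pow hk, mul_zero, zero_mul, add_zero, zero_add, ← hh0def] at hc
    exact hc
  have hdinv0 : d h0⁻¹ = -(b1 * h0⁻¹) := by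
    rw [d_inv d hadd hmul h0 hh0, hb1]
    field_simp
  set v : PowerSeries E := PowerSeries.C h0⁻¹ * h with hv
  have hE4 : Del d σ v = PowerSeries.C (k : E) * (PowerSeries.X * (σ * v))
      + PowerSeries.C (h0⁻¹ * b0) * PowerSeries.X ^ k := by
    rw [hv, Del_mul d hadd hmul, Del_C d hadd hmul, hdinv0, hE3]
    simp only [map_neg, map_mul]
    ring
  have hv0 : PowerSeries.constantCoeff v = 1 := by
    rw [hv, map_mul, PowerSeries.constantCoeff_C, ← hh0def]
    exact inv_mul_cancel₀ hh0
  set c1 : E := PowerSeries.coeff 1 v with hc1def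
  have hDel1 : PowerSeries.coeff 1 (Del d σ v) = d c1 := by
    unfold Del
    rw [map_add, coeff_pdS]
    have hassoc : PowerSeries.X ^ 2 * σ * derivativeFun v
        = PowerSeries.X ^ 2 * (σ * derivativeFun v) := by ring
    rw [hassoc, PowerSeries.coeff_X_pow_mul']
    norm_num
    rfl
  have hA1 : PowerSeries.coeff 1 (PowerSeries.X * (σ * v)) = S.coeff 0 := by
    have h01 : (1 : ℕ) = 0 + 1 := rfl
    rw [h01, PowerSeries.coeff_succ_X_mul, PowerSeries.coeff_zero_eq_constantCoeff_apply,
      map_mul, hv0, hσ, Polynomial.constantCoeff_coe, mul_one]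
  have hc1 := congrArg (PowerSeries.coeff 1) hE4
  rw [hDel1, map_add, PowerSeries.coeff_C_mul, PowerSeries.coeff_C_mul, hA1,
    PowerSeries.coeff_X_pow] at hc1
  by_cases hk1 : k = 1
  · -- use the coefficient of `X^2`
    subst hk1
    right
    set c2 : E := PowerSeries.coeff 2 v with hc2def
    have hdc1 : PowerSeries.coeff 0 (derivativeFun v) = c1 := by
      rw [coeff_derivativeFun']
      norm_num [hc1def]
    have hDel2 : PowerSeries.coeff 2 (Del d σ v) = d c2 + S.coeff 0 * c1 := by
      unfold Del
      rw [map_add, coeff_pdS]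
      have hassoc : PowerSeries.X ^ 2 * σ * derivativeFun v
          = PowerSeries.X ^ 2 * (σ * derivativeFun v) := by ring
      rw [hassoc, PowerSeries.coeff_X_pow_mul', if_pos (le_refl 2)]
      have h22 : (2 : ℕ) - 2 = 0 := rfl
      rw [h22, coeff_zero_mul', hdc1, hσ, Polynomial.coeff_coe]
    have hA2 : PowerSeries.coeff 2 (PowerSeries.X * (σ * v))
        = S.coeff 0 * c1 + S.coeff 1 := by
      have h12 : (2 : ℕ) = 1 + 1 := rfl
      rw [h12, PowerSeries.coeff_succ_X_mul, coeff_one_mul']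
      rw [← PowerSeries.coeff_zero_eq_constantCoeff_apply] at hv0
      rw [hv0, hσ, Polynomial.coeff_coe, Polynomial.coeff_coe, ← hc1def]
      ring
    have hc2 := congrArg (PowerSeries.coeff 2) hE4
    rw [hDel2, map_add, PowerSeries.coeff_C_mul, PowerSeries.coeff_C_mul, hA2,
      pow_one, PowerSeries.coeff_X] at hc2
    norm_num at hc2
    exact ⟨c2, by linear_combination hc2⟩
  · -- use the coefficient of `X`
    left
    have hif : (if 1 = k then (1 : E) else 0) = 0 := by
      rw [if_neg (fun hh => hk1 hh.symm)]
    rw [hif, mul_zero, add_zero] at hc1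
    exact ⟨(k : E)⁻¹ * c1, d_nat_cancel d hadd k hk c1 (S.coeff 0) hc1⟩

end d

end Stmt7Aux

set_option maxHeartbeats 1000000 in
open Stmt7Aux in
/-- Let `F` be an algebraically closed differential subfield of a differential
field `K` (characteristic zero) with `K = F(y)`, `y` transcendental over `F`, and
`y' = a₂y² + a₃y³ + ⋯ + aₙyⁿ` (`n ≥ 3`, `aᵢ ∈ F`), where neither `a₂` nor `a₃` has an
antiderivative in `F`.  Then no `w ∈ K \ F` satisfies a Riccati equation
`w' = b₂·w² + b₁·w + b₀` with `b₀, b₁, b₂ ∈ F`. -/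
theorem stmt_7 {K : Type*} [Field K] [CharZero K]
    (D : K → K)
    (hDadd : ∀ a b : K, D (a + b) = D a + D b)
    (hDmul : ∀ a b : K, D (a * b) = a * D b + D a * b)
    (F : Subfield K)
    (hFD : ∀ x ∈ F, D x ∈ F)
    (hFAC : IsAlgClosed F)
    (y : K)
    (hy : Transcendental F y)
    (hgen : Subfield.closure ((F : Set K) ∪ {y}) = ⊤)
    (n : ℕ) (hn : 3 ≤ n)
    (a : ℕ → K) (ha : ∀ i, a i ∈ F)
    (hyder : D y = ∑ i ∈ Finset.Icc 2 n, a i * y ^ i)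
    (ha2 : ¬∃ u ∈ F, D u = a 2)
    (ha3 : ¬∃ u ∈ F, D u = a 3) :
    ∀ w : K, w ∉ F → ∀ b0 b1 b2 : K, b0 ∈ F → b1 ∈ F → b2 ∈ F →
      D w ≠ b2 * w ^ 2 + b1 * w + b0 := by
  classical
  -- basic facts about D
  have hD0 : D 0 = 0 := by have := hDadd 0 0; simpa using this
  have hD1 : D 1 = 0 := by have := hDmul 1 1; simpa using this
  have hDneg : ∀ x : K, D (-x) = -D x := by
    intro x
    have h := hDadd x (-x)
    rw [add_neg_cancel, hD0] at h
    exact eq_neg_of_add_eq_zero_right h.symm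
  have hDsub : ∀ x z : K, D (x - z) = D x - D z := by
    intro x z
    rw [sub_eq_add_neg, hDadd, hDneg, sub_eq_add_neg]
  have hDinv : ∀ x : K, x ≠ 0 → D x⁻¹ = -(D x * x⁻¹ * x⁻¹) := by
    intro x hx
    have h := hDmul x x⁻¹
    rw [mul_inv_cancel₀ hx, hD1] at h
    field_simp at h ⊢
    linear_combination -h
  -- the derivation on the subfield
  set d : ↥F → ↥F := fun c => ⟨D ↑c, hFD _ c.2⟩ with hd
  have hdadd : ∀ a b : ↥F, d (a + b) = d a + d b := by
    intro a b
    apply Subtype.ext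
    show D ↑(a + b) = ↑(d a + d b)
    push_cast
    show D (↑a + ↑b) = D ↑a + D ↑b
    exact hDadd _ _
  have hdmul : ∀ a b : ↥F, d (a * b) = a * d b + d a * b := by
    intro a b
    apply Subtype.ext
    show D ↑(a * b) = ↑(a * d b + d a * b)
    push_cast
    show D (↑a * ↑b) = ↑a * D ↑b + D ↑a * ↑b
    exact hDmul _ _
  have halg : ∀ e : ↥F, (Polynomial.aeval y) (Polynomial.C e) = (e : K) := by
    intro e
    rw [Polynomial.aeval_C]
    rfl
  have hinj : Function.Injective (Polynomial.aeval y : Polynomial ↥F →ₐ[↥F] K) :=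
    transcendental_iff_injective.mp hy
  have havne : ∀ {t : Polynomial ↥F}, t ≠ 0 → (Polynomial.aeval y) t ≠ 0 := by
    intro t ht h0
    exact ht (hinj (by rw [h0, map_zero]))
  -- representation of elements of `K` as rational functions in `y`
  have hrep : ∀ x : K, ∃ P Q : Polynomial ↥F, Q ≠ 0 ∧
      x = (Polynomial.aeval y) P / (Polynomial.aeval y) Q := by
    intro x
    have hx : x ∈ Subfield.closure ((F : Set K) ∪ {y}) := by rw [hgen]; trivial
    refine Subfield.closure_induction ?_ ?_ ?_ ?_ ?_ ?_ hx
    · rintro z (hz | hz)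
      · exact ⟨Polynomial.C ⟨z, hz⟩, 1, one_ne_zero, by rw [map_one, halg]; simp⟩
      · refine ⟨Polynomial.X, 1, one_ne_zero, ?_⟩
        rw [map_one, Polynomial.aeval_X]
        simp [Set.mem_singleton_iff.mp hz]
    · exact ⟨1, 1, one_ne_zero, by simp⟩
    · rintro x1 x2 _ _ ⟨P1, Q1, h1, e1⟩ ⟨P2, Q2, h2, e2⟩
      refine ⟨P1 * Q2 + P2 * Q1, Q1 * Q2, mul_ne_zero h1 h2, ?_⟩
      rw [e1, e2, div_add_div _ _ (havne h1) (havne h2), map_add, map_mul, map_mul, map_mul]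
      ring_nf
    · rintro x1 _ ⟨P1, Q1, h1, e1⟩
      exact ⟨-P1, Q1, h1, by rw [e1, map_neg, neg_div]⟩
    · rintro x1 _ ⟨P1, Q1, h1, e1⟩
      by_cases hP : P1 = 0
      · exact ⟨0, 1, one_ne_zero, by simp [e1, hP]⟩
      · exact ⟨Q1, P1, hP, by rw [e1, inv_div]⟩
    · rintro x1 x2 _ _ ⟨P1, Q1, h1, e1⟩ ⟨P2, Q2, h2, e2⟩
      exact ⟨P1 * P2, Q1 * Q2, mul_ne_zero h1 h2,
        by rw [e1, e2, map_mul, map_mul, div_mul_div_comm]⟩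
  -- the polynomial `S` with `y' = y^2 * S(y)`
  set a' : ℕ → ↥F := fun i => ⟨a i, ha i⟩ with ha'
  set Sp : Polynomial ↥F :=
    ∑ i ∈ Finset.Icc 2 n, Polynomial.C (a' i) * Polynomial.X ^ (i - 2) with hSpdef
  have hSpc : ∀ m : ℕ, Sp.coeff m
      = ∑ i ∈ Finset.Icc 2 n, if m = i - 2 then a' i else 0 := by
    intro m
    rw [hSpdef, Polynomial.finset_sum_coeff]
    refine Finset.sum_congr rfl fun i _ => ?_
    rw [Polynomial.coeff_C_mul, Polynomial.coeff_X_pow]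
    split <;> simp
  have hSp0 : Sp.coeff 0 = a' 2 := by
    rw [hSpc 0, Finset.sum_eq_single 2]
    · simp
    · intro i hi hne
      rw [if_neg]
      have := (Finset.mem_Icc.mp hi).1
      omega
    · intro hne
      exact absurd (Finset.mem_Icc.mpr ⟨le_refl 2, by omega⟩) hne
  have hSp1 : Sp.coeff 1 = a' 3 := by
    rw [hSpc 1, Finset.sum_eq_single 3]
    · simp
    · intro i hi hne
      rw [if_neg]
      have := (Finset.mem_Icc.mp hi).1
      omega
    · intro hne
      exact absurd (Finset.mem_Icc.mpr ⟨by omega, hn⟩) hne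
  have hyd : (Polynomial.aeval y) (Polynomial.X ^ 2 * Sp) = D y := by
    rw [hyder, map_mul, map_pow, Polynomial.aeval_X, hSpdef, map_sum, Finset.mul_sum]
    refine Finset.sum_congr rfl fun i hi => ?_
    rw [map_mul, halg, map_pow, Polynomial.aeval_X]
    have h2i : 2 ≤ i := (Finset.mem_Icc.mp hi).1
    have hii : 2 + (i - 2) = i := by omega
    show y ^ 2 * (a i * y ^ (i - 2)) = a i * y ^ i
    calc y ^ 2 * (a i * y ^ (i - 2)) = a i * y ^ (2 + (i - 2)) := by rw [pow_add]; ring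
      _ = a i * y ^ i := by rw [hii]
  -- derivative of powers of y
  have hpow : ∀ m : ℕ, D (y ^ (m + 1)) = (m + 1 : K) * y ^ m * D y := by
    intro m
    induction m with
    | zero => simp
    | succ m ih =>
      have : y ^ (m + 2) = y ^ (m + 1) * y := by ring
      rw [this, hDmul, ih]
      push_cast
      ring
  -- the key formula for derivatives of polynomial expressions in y
  have kd : ∀ t : Polynomial ↥F, D ((Polynomial.aeval y) t)
      = (Polynomial.aeval y) (pdP d t)
        + (Polynomial.aeval y) (Polynomial.derivative t) * D y := by
    intro t
    have hd0 : d 0 = 0 := d_zero d hdadd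
    induction t using Polynomial.induction_on' with
    | add p q hp hq =>
      rw [map_add, hDadd, hp, hq, pdP_add d hdadd, Polynomial.derivative_add,
        map_add, map_add]
      ring
    | monomial m e =>
      rw [pdP_monomial d hd0, Polynomial.derivative_monomial]
      rw [Polynomial.aeval_monomial, Polynomial.aeval_monomial, Polynomial.aeval_monomial]
      have hcoe : ∀ e' : ↥F, (algebraMap ↥F K) e' = (e' : K) := fun _ => rfl
      rw [hcoe, hcoe, hcoe]
      have hDe : D ↑e = ↑(d e) := rfl
      cases m with
      | zero =>
        simp only [pow_zero, mul_one, Nat.cast_zero, mul_zero, map_zero, zero_mul]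
        norm_num
        exact hDe
      | succ m' =>
        rw [hDmul, hpow m', hDe]
        have : ((e * ((m' : ↥F) + 1) : ↥F) : K) = ↑e * ((m' : K) + 1) := by push_cast; ring
        simp only [Nat.add_sub_cancel]
        push_cast
        ring
  -- the main pipeline: a Riccati solution with a coprime representation whose
  -- denominator vanishes at 0 leads to a contradiction
  have pipeline : ∀ (w : K) (P Q : Polynomial ↥F), Q ≠ 0 → IsCoprime P Q → Q.coeff 0 = 0 →
      w = (Polynomial.aeval y) P / (Polynomial.aeval y) Q → ∀ B2 B1 B0 : ↥F,
      D w = ↑B2 * w ^ 2 + ↑B1 * w + ↑B0 → False := by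
    intro w P Q hQ hcop hQ0 hwrep B2 B1 B0 hric
    have havQ : (Polynomial.aeval y) Q ≠ 0 := havne hQ
    have hwq : w * (Polynomial.aeval y) Q = (Polynomial.aeval y) P := by
      rw [hwrep]; field_simp
    have e1 : D ((Polynomial.aeval y) P) * (Polynomial.aeval y) Q
        - (Polynomial.aeval y) P * D ((Polynomial.aeval y) Q)
        = D w * ((Polynomial.aeval y) Q) ^ 2 := by
      have hDwq := hDmul w ((Polynomial.aeval y) Q)
      rw [hwq] at hDwq
      linear_combination (Polynomial.aeval y) Q * hDwq + D ((Polynomial.aeval y) Q) * hwq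
    have e2 : D w * ((Polynomial.aeval y) Q) ^ 2
        = ↑B2 * ((Polynomial.aeval y) P) ^ 2
          + ↑B1 * ((Polynomial.aeval y) P * (Polynomial.aeval y) Q)
          + ↑B0 * ((Polynomial.aeval y) Q) ^ 2 := by
      rw [hric]
      linear_combination (↑B2 * (w * (Polynomial.aeval y) Q + (Polynomial.aeval y) P)
        + ↑B1 * (Polynomial.aeval y) Q) * hwq
    have hkey : (Polynomial.aeval y)
        ((pdP d P + Polynomial.derivative P * (Polynomial.X ^ 2 * Sp)) * Q
          - P * (pdP d Q + Polynomial.derivative Q * (Polynomial.X ^ 2 * Sp)))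
        = (Polynomial.aeval y)
          (Polynomial.C B2 * P ^ 2 + Polynomial.C B1 * (P * Q) + Polynomial.C B0 * Q ^ 2) := by
      have hyd' : y ^ 2 * (Polynomial.aeval y) Sp = D y := by
        rw [← hyd, map_mul, map_pow, Polynomial.aeval_X]
      have kdP := kd P
      have kdQ := kd Q
      rw [← hyd'] at kdP kdQ
      simp only [map_sub, map_add, map_mul, map_pow, halg, Polynomial.aeval_X]
      linear_combination (-(Polynomial.aeval y) Q) * kdP + (Polynomial.aeval y) P * kdQ
        + e1 + e2
    have hpoly := hinj hkey
    rcases core d hdadd hdmul Sp P Q B2 B1 B0 hQ hcop hQ0 hpoly with ⟨u, hu⟩ | ⟨u, hu⟩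
    · refine ha2 ⟨↑u, u.2, ?_⟩
      have : D ↑u = ↑(d u) := rfl
      rw [this, hu, hSp0]
    · refine ha3 ⟨↑u, u.2, ?_⟩
      have : D ↑u = ↑(d u) := rfl
      rw [this, hu, hSp1]
  -- main argument
  intro w hw b0 b1 b2 hb0 hb1 hb2 hric
  obtain ⟨P0, Q0, hQ0ne, hw0⟩ := hrep w
  set g : Polynomial ↥F := GCDMonoid.gcd P0 Q0 with hgdef
  have hg : g ≠ 0 := gcd_ne_zero_of_right hQ0ne
  set P1 : Polynomial ↥F := P0 / g with hP1def
  set Q1 : Polynomial ↥F := Q0 / g with hQ1def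
  have hP0eq : g * P1 = P0 := EuclideanDomain.mul_div_cancel' hg (gcd_dvd_left _ _)
  have hQ0eq : g * Q1 = Q0 := EuclideanDomain.mul_div_cancel' hg (gcd_dvd_right _ _)
  have hcop : IsCoprime P1 Q1 := isCoprime_div_gcd_div_gcd hQ0ne
  have hQ1 : Q1 ≠ 0 := by
    intro h
    rw [h, mul_zero] at hQ0eq
    exact hQ0ne hQ0eq.symm
  have hw1 : w = (Polynomial.aeval y) P1 / (Polynomial.aeval y) Q1 := by
    rw [hw0, ← hP0eq, ← hQ0eq, map_mul, map_mul, mul_div_mul_left _ _ (havne hg)]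
  by_cases hc0 : Q1.coeff 0 = 0
  · exact pipeline w P1 Q1 hQ1 hcop hc0 hw1 ⟨b2, hb2⟩ ⟨b1, hb1⟩ ⟨b0, hb0⟩ hric
  · -- reduce to a solution with a pole at 0
    set cE : ↥F := P1.coeff 0 * (Q1.coeff 0)⁻¹ with hcEdef
    set c : K := ↑cE with hcdef
    have hcF : c ∈ F := cE.2
    have hwc : w ≠ c := fun h => hw (h ▸ hcF)
    have hu0 : w - c ≠ 0 := sub_ne_zero.mpr hwc
    set w2 : K := (w - c)⁻¹ with hw2def
    have hw2u : w2 * (w - c) = 1 := inv_mul_cancel₀ hu0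
    set B2E : ↥F := -(⟨b2, hb2⟩ * cE ^ 2 + ⟨b1, hb1⟩ * cE + ⟨b0, hb0⟩ - d cE) with hB2E
    set B1E : ↥F := -(⟨b1, hb1⟩ + ⟨b2, hb2⟩ * cE + ⟨b2, hb2⟩ * cE) with hB1E
    set B0E : ↥F := -⟨b2, hb2⟩ with hB0E
    have hB2K : (B2E : K) = -(b2 * c ^ 2 + b1 * c + b0 - D c) := by
      rw [hB2E]
      push_cast
      rfl
    have hB1K : (B1E : K) = -(b1 + 2 * b2 * c) := by
      rw [hB1E]
      push_cast
      ring
    have hB0K : (B0E : K) = -b2 := by rw [hB0E]; push_cast; ring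
    have hric2 : D w2 = ↑B2E * w2 ^ 2 + ↑B1E * w2 + ↑B0E := by
      rw [hB2K, hB1K, hB0K]
      have hDu : D (w - c) = b2 * w ^ 2 + b1 * w + b0 - D c := by rw [hDsub, hric]
      have hDw2 : D w2 = -(D (w - c) * w2 * w2) := hDinv _ hu0
      rw [hDw2, hDu, hw2def]
      have hwu : w = (w - c) + c := by ring
      generalize hgu : w - c = u at hu0 hwu ⊢
      rw [hwu]
      field_simp
      ring
    -- new representation
    set Q2 : Polynomial ↥F := P1 - Polynomial.C cE * Q1 with hQ2def
    have havQ1 : (Polynomial.aeval y) Q1 ≠ 0 := havne hQ1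
    have havQ2eq : (Polynomial.aeval y) Q2
        = (Polynomial.aeval y) P1 - c * (Polynomial.aeval y) Q1 := by
      rw [hQ2def, map_sub, map_mul, halg]
    have hQ2ne : Q2 ≠ 0 := by
      intro h
      apply hwc
      have : (Polynomial.aeval y) P1 = c * (Polynomial.aeval y) Q1 := by
        have := congrArg (Polynomial.aeval y) h
        rw [map_sub, map_mul, halg, map_zero, sub_eq_zero] at this
        exact this
      rw [hw1, this, mul_div_assoc, div_self havQ1, mul_one]
    have hcop2 : IsCoprime Q1 Q2 := by
      have h := (hcop.symm).add_mul_left_right (-(Polynomial.C cE))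
      have heq2 : P1 + Q1 * -(Polynomial.C cE) = Q2 := by rw [hQ2def]; ring
      rwa [heq2] at h
    have hQ2c0 : Q2.coeff 0 = 0 := by
      rw [hQ2def, Polynomial.coeff_sub, Polynomial.coeff_C_mul, hcEdef]
      field_simp
      simp
    have hw2rep : w2 = (Polynomial.aeval y) Q1 / (Polynomial.aeval y) Q2 := by
      rw [hw2def, havQ2eq, hw1]
      rw [div_sub' havQ1, inv_div, mul_comm ((Polynomial.aeval y) Q1) c]
    exact pipeline w2 Q1 Q2 hQ2ne hcop2 hQ2c0 hw2rep B2E B1E B0E hric2
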